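/- Let w₁ ≥ 0, w₂ > 0, c > 0 be reals, let 0 < σ₁ ≤ σ₂ ≤ c, let μ₁, μ₂, x ∈ ℝ, and let π₁, π₂ ≥ 0 with π₁ + π₂ = 1. Set w₃ = w₂(σ₂² + (μ₁ − μ₂)²). Then log( π₁ φ(x; μ₁, σ₁) + π₂ φ(x; μ₂, σ₂) ) − w₁ KL(N(μ₁,σ₁²), N(μ₂,σ₂²)) − w₂ KL(N(μ₂,σ₂²), N(μ₁,σ₁²)) ≤ −(1 + w₂) log σ₁ − w₃/(2σ₁²) + w₂ log c + (w₁ + w₂)/2. -/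
import Mathlib


open Real

/-- Univariate Gaussian density `φ(x; μ, σ) = (1/(√(2π) σ)) exp(−(x−μ)²/(2σ²))`. -/
noncomputable def phi (x μ σ : ℝ) : ℝ :=
  (1 / (Real.sqrt (2 * Real.pi) * σ)) * Real.exp (-(x - μ) ^ 2 / (2 * σ ^ 2))

/-- Closed form of the KL divergence between the univariate Gaussians
`N(μ₁, σ₁²)` and `N(μ₂, σ₂²)`:
`KL = log(σ₂/σ₁) + (σ₁² + (μ₁−μ₂)²)/(2σ₂²) − 1/2`. -/
noncomputable def klUni (μ₁ σ₁ μ₂ σ₂ : ℝ) : ℝ :=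
  Real.log (σ₂ / σ₁) + (σ₁ ^ 2 + (μ₁ - μ₂) ^ 2) / (2 * σ₂ ^ 2) - 1 / 2

theorem univariate_penalized_bound_sigma (w₁ w₂ c : ℝ) (hw₁ : 0 ≤ w₁) (hw₂ : 0 < w₂)
    (hc : 0 < c) (σ₁ σ₂ : ℝ) (hσ₁ : 0 < σ₁) (hσ₁₂ : σ₁ ≤ σ₂) (hσ₂c : σ₂ ≤ c)
    (μ₁ μ₂ x : ℝ) (π₁ π₂ : ℝ) (hπ₁ : 0 ≤ π₁) (hπ₂ : 0 ≤ π₂) (hπ : π₁ + π₂ = 1) :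
    Real.log (π₁ * phi x μ₁ σ₁ + π₂ * phi x μ₂ σ₂)
      - w₁ * klUni μ₁ σ₁ μ₂ σ₂ - w₂ * klUni μ₂ σ₂ μ₁ σ₁ ≤
      -(1 + w₂) * Real.log σ₁ - (w₂ * (σ₂ ^ 2 + (μ₁ - μ₂) ^ 2)) / (2 * σ₁ ^ 2)
        + w₂ * Real.log c + (w₁ + w₂) / 2 := by
  have hσ₂ : 0 < σ₂ := lt_of_lt_of_le hσ₁ hσ₁₂
  have hsp : (0:ℝ) < Real.sqrt (2 * Real.pi) := Real.sqrt_pos.mpr (by positivity)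
  have hsp1 : (1:ℝ) ≤ Real.sqrt (2 * Real.pi) := by
    rw [show (1:ℝ) = Real.sqrt 1 by simp]
    exact Real.sqrt_le_sqrt (by nlinarith [Real.pi_gt_three])
  -- positivity and bound of phi
  have hp1 : 0 < phi x μ₁ σ₁ := by unfold phi; positivity
  have hp2 : 0 < phi x μ₂ σ₂ := by unfold phi; positivity
  have hb : ∀ μ σ : ℝ, 0 < σ → σ₁ ≤ σ →
      phi x μ σ ≤ 1 / (Real.sqrt (2 * Real.pi) * σ₁) := by
    intro μ σ hσ hle
    have he : Real.exp (-(x - μ) ^ 2 / (2 * σ ^ 2)) ≤ 1 := by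
      rw [Real.exp_le_one_iff, neg_div]
      have : 0 ≤ (x - μ) ^ 2 / (2 * σ ^ 2) := by positivity
      linarith
    have h1 : (1:ℝ) / (Real.sqrt (2 * Real.pi) * σ) ≤ 1 / (Real.sqrt (2 * Real.pi) * σ₁) := by
      apply one_div_le_one_div_of_le (by positivity)
      nlinarith
    calc phi x μ σ ≤ (1 / (Real.sqrt (2 * Real.pi) * σ)) * 1 := by
          unfold phi
          apply mul_le_mul_of_nonneg_left he (by positivity)
      _ ≤ 1 / (Real.sqrt (2 * Real.pi) * σ₁) := by rw [mul_one]; exact h1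
  have hmixpos : 0 < π₁ * phi x μ₁ σ₁ + π₂ * phi x μ₂ σ₂ := by
    rcases lt_or_eq_of_le hπ₁ with h | h
    · nlinarith [mul_nonneg hπ₂ hp2.le]
    · have h2 : π₂ = 1 := by linarith
      rw [← h, h2]; simpa using hp2
  have hmixle : π₁ * phi x μ₁ σ₁ + π₂ * phi x μ₂ σ₂ ≤ 1 / (Real.sqrt (2 * Real.pi) * σ₁) := by
    have h1 := hb μ₁ σ₁ hσ₁ le_rfl
    have h2 := hb μ₂ σ₂ hσ₂ hσ₁₂
    nlinarith
  have hlogmix : Real.log (π₁ * phi x μ₁ σ₁ + π₂ * phi x μ₂ σ₂) ≤ -Real.log σ₁ := by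
    calc Real.log (π₁ * phi x μ₁ σ₁ + π₂ * phi x μ₂ σ₂)
        ≤ Real.log (1 / (Real.sqrt (2 * Real.pi) * σ₁)) := Real.log_le_log hmixpos hmixle
      _ = -(Real.log (Real.sqrt (2 * Real.pi)) + Real.log σ₁) := by
          rw [one_div, Real.log_inv, Real.log_mul (ne_of_gt hsp) (ne_of_gt hσ₁)]
      _ ≤ -Real.log σ₁ := by
          have : 0 ≤ Real.log (Real.sqrt (2 * Real.pi)) := Real.log_nonneg hsp1
          linarith
  -- KL₁₂ ≥ -1/2
  have hkl12 : -(1/2 : ℝ) ≤ klUni μ₁ σ₁ μ₂ σ₂ := by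
    unfold klUni
    have h1 : 0 ≤ Real.log (σ₂ / σ₁) :=
      Real.log_nonneg ((one_le_div hσ₁).mpr hσ₁₂)
    have h2 : 0 ≤ (σ₁ ^ 2 + (μ₁ - μ₂) ^ 2) / (2 * σ₂ ^ 2) := by positivity
    linarith
  -- expand KL₂₁
  have hkl21 : klUni μ₂ σ₂ μ₁ σ₁ =
      Real.log σ₁ - Real.log σ₂ + (σ₂ ^ 2 + (μ₁ - μ₂) ^ 2) / (2 * σ₁ ^ 2) - 1/2 := by
    unfold klUni
    rw [Real.log_div (ne_of_gt hσ₁) (ne_of_gt hσ₂)]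
    ring_nf
  have hlogc : Real.log σ₂ ≤ Real.log c := Real.log_le_log hσ₂ hσ₂c
  have key1 : 0 ≤ w₂ * (Real.log c - Real.log σ₂) :=
    mul_nonneg hw₂.le (by linarith)
  have key2 : 0 ≤ w₁ * (klUni μ₁ σ₁ μ₂ σ₂ + 1/2) := mul_nonneg hw₁ (by linarith)
  have hw2kl : w₂ * klUni μ₂ σ₂ μ₁ σ₁ =
      w₂ * Real.log σ₁ - w₂ * Real.log σ₂
        + w₂ * ((σ₂ ^ 2 + (μ₁ - μ₂) ^ 2) / (2 * σ₁ ^ 2)) - w₂ / 2 := by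
    rw [hkl21]; ring
  have hdiv : w₂ * ((σ₂ ^ 2 + (μ₁ - μ₂) ^ 2) / (2 * σ₁ ^ 2)) =
      (w₂ * (σ₂ ^ 2 + (μ₁ - μ₂) ^ 2)) / (2 * σ₁ ^ 2) := by ring
  nlinarith [hlogmix, hkl12, key1, key2, hw2kl, hdiv]
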